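/- For every s > 0 and every t > 1, average-case L₂-approximation with Gaussian kernels is EC-(s,t)-weakly tractable for all nonincreasing sequences of positive shape parameters. -/

import Mathlib

/-!
The eigenvalues `λ_d(j)` are the law of `d` independent geometric variables with parameters
`ω_k ≤ ω_1`. Keeping the box `{0, …, m-1}^d` of `m^d` indices leaves the tail
`1 - ∏ (1 - ω_k^m) ≤ d ω_1^m`, so `m ≈ (ln d + 2 ln ε⁻¹) / ln ω_1⁻¹` suffices and
`ln n(ε,d) ≤ d ln m ≤ d (ln C + ln d + ln (1 + ln ε⁻¹))`. By Young's inequality this is at most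
`K (d^((t+1)/2) + (1 + ln ε⁻¹)^(s/2))`, which is `o(d^t + (1 + ln ε⁻¹)^s)`.
-/

open Filter

/-- `omegaOf x` is `ω` for shape parameter squared `x = γ²`:
`ω = 2γ²/(1+2γ²+√(1+4γ²))`. -/
noncomputable def omegaOf (x : ℝ) : ℝ := 2 * x / (1 + 2 * x + Real.sqrt (1 + 4 * x))

/-- Eigenvalues `λ_d(j) = ∏_{k=1}^d (1-ω_k) ω_k^{j_k}`, where `g k = γ_{k+1}²`. -/
noncomputable def eigen (g : ℕ → ℝ) (d : ℕ) (j : Fin d → ℕ) : ℝ :=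
  ∏ k : Fin d, (1 - omegaOf (g (k : ℕ))) * omegaOf (g (k : ℕ)) ^ (j k)

/-- The information complexity `n(ε,d)`: the least `n` such that some finite set `S` of
multi-indices with `|S| ≤ n` satisfies `∑_{j ∉ S} λ_d(j) ≤ ε²`. -/
noncomputable def infoComp (g : ℕ → ℝ) (ε : ℝ) (d : ℕ) : ℕ :=
  sInf {n : ℕ | ∃ S : Finset (Fin d → ℕ), S.card ≤ n ∧
    (∑' j : {j : Fin d → ℕ // j ∉ S}, eigen g d j.1) ≤ ε ^ 2}

/-- EC-`(s,t)`-weak tractability: `lim_{ε⁻¹+d→∞} ln n(ε,d) / ((1+ln ε⁻¹)^s + d^t) = 0`. -/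
def ECWeakTract (g : ℕ → ℝ) (s t : ℝ) : Prop :=
  ∀ η : ℝ, 0 < η → ∃ M : ℝ, ∀ (d : ℕ) (ε : ℝ), 1 ≤ d → 0 < ε → ε < 1 →
    M ≤ ε⁻¹ + d →
      Real.log (infoComp g ε d : ℝ) ≤ η * ((1 + Real.log ε⁻¹) ^ s + (d : ℝ) ^ t)

open Finset Real Topology

lemma omegaOf_nonneg {x : ℝ} (hx : 0 ≤ x) : 0 ≤ omegaOf x :=
  div_nonneg (by linarith) (by positivity)

lemma omegaOf_pos {x : ℝ} (hx : 0 < x) : 0 < omegaOf x :=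
  div_pos (by linarith) (by positivity)

lemma omegaOf_lt_one {x : ℝ} (hx : 0 ≤ x) : omegaOf x < 1 := by
  rw [omegaOf, div_lt_one (by positivity)]
  linarith [sqrt_pos.2 (by linarith : (0 : ℝ) < 1 + 4 * x)]

lemma omegaOf_eq_one_sub {x : ℝ} (hx : 0 ≤ x) : omegaOf x = 1 - 2 / (√(1 + 4 * x) + 1) := by
  have hsq : √(1 + 4 * x) ^ 2 = 1 + 4 * x := sq_sqrt (by linarith)
  rw [omegaOf, eq_sub_iff_add_eq, div_add_div _ _ (by positivity) (by positivity),
    div_eq_one_iff_eq (by positivity)]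
  nlinarith

lemma omegaOf_le_omegaOf {x y : ℝ} (hx : 0 ≤ x) (hxy : x ≤ y) : omegaOf x ≤ omegaOf y := by
  rw [omegaOf_eq_one_sub hx, omegaOf_eq_one_sub (hx.trans hxy)]
  gcongr

theorem hasSum_pi_prod {β : Type*} {d : ℕ} {F : Fin d → β → ℝ} {a : Fin d → ℝ}
    (hF : ∀ k, HasSum (F k) (a k)) (hF0 : ∀ k b, 0 ≤ F k b) :
    HasSum (fun j : Fin d → β => ∏ k, F k (j k)) (∏ k, a k) := by
  induction d with
  | zero => simp
  | succ d ih =>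
    have htail := ih (fun k => hF k.succ) (fun k => hF0 k.succ)
    have hsummable :
        Summable fun p : β × (Fin d → β) => F 0 p.1 * ∏ k : Fin d, F k.succ (p.2 k) :=
      Summable.mul_of_nonneg (f := F 0) (g := fun j : Fin d → β => ∏ k : Fin d, F k.succ (j k))
        (hF 0).summable htail.summable (hF0 0)
        fun j => prod_nonneg fun k _ => hF0 k.succ (j k)
    have hprod := (hF 0).mul htail hsummable
    have hcons : (fun j => ∏ k, F k (j k)) ∘ Fin.consEquiv (fun _ => β)
        = fun p => F 0 p.1 * ∏ k : Fin d, F k.succ (p.2 k) := by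
      ext p
      simp [Fin.consEquiv, Fin.prod_univ_succ]
    rw [Fin.prod_univ_succ, ← (Fin.consEquiv fun _ => β).hasSum_iff, hcons]
    exact hprod

theorem one_sub_sum_le_prod_one_sub {ι R : Type*} [CommRing R] [LinearOrder R]
    [IsStrictOrderedRing R] (s : Finset ι) {f : ι → R}
    (h0 : ∀ i ∈ s, 0 ≤ f i) (h1 : ∀ i ∈ s, f i ≤ 1) :
    1 - ∑ i ∈ s, f i ≤ ∏ i ∈ s, (1 - f i) := by
  induction s using Finset.cons_induction with
  | empty => simp
  | cons a s ha ih =>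
    simp only [forall_mem_cons] at h0 h1
    have ih := ih h0.2 h1.2
    rw [sum_cons, prod_cons]
    nlinarith [sum_nonneg h0.2, mul_le_mul_of_nonneg_left ih (sub_nonneg.2 h1.1)]

lemma hasSum_one_sub_mul_pow {ω : ℝ} (h0 : 0 ≤ ω) (h1 : ω < 1) :
    HasSum (fun n : ℕ => (1 - ω) * ω ^ n) 1 := by
  simpa [mul_inv_cancel₀ (sub_ne_zero.2 h1.ne')] using
    (hasSum_geometric_of_lt_one h0 h1).mul_left (1 - ω)

lemma mul_log_le_rpow_add {p p' q x y : ℝ} (hpp' : p.HolderConjugate p') (hq : 0 < q)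
    (hx : 0 ≤ x) (hy : 0 ≤ y) : x * log y ≤ p' / q * (x ^ p + y ^ q) := by
  set δ := q / p'
  have hδ : 0 < δ := div_pos hq hpp'.symm.pos
  have hyoung : x * y ^ δ ≤ x ^ p + y ^ q := by
    have h := young_inequality_of_nonneg hx (rpow_nonneg hy δ) hpp'
    rw [← rpow_mul hy, div_mul_cancel₀ _ hpp'.symm.ne_zero] at h
    have hxp : x ^ p / p ≤ x ^ p := div_le_self (rpow_nonneg hx p) hpp'.lt.le
    have hyq : y ^ q / p' ≤ y ^ q := div_le_self (rpow_nonneg hy q) hpp'.symm.lt.le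
    linarith
  calc x * log y ≤ x * (y ^ δ / δ) := mul_le_mul_of_nonneg_left (log_le_rpow_div hy hδ) hx
    _ = p' / q * (x * y ^ δ) := by
      rw [div_eq_mul_inv, show δ⁻¹ = p' / q from inv_div q p']
      ring
    _ ≤ p' / q * (x ^ p + y ^ q) :=
      mul_le_mul_of_nonneg_left hyoung (div_nonneg hpp'.symm.nonneg hq.le)

lemma exists_mul_rpow_le_mul_rpow_add {p t : ℝ} (hp : 0 ≤ p) (hpt : p < t) (K : ℝ) {η : ℝ}
    (hη : 0 < η) : ∃ C, ∀ x : ℝ, 0 ≤ x → K * x ^ p ≤ η * x ^ t + C := by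
  have hlim : Tendsto (fun x : ℝ => K * x ^ (p - t)) atTop (𝓝 0) := by
    simpa [neg_sub] using (tendsto_rpow_neg_atTop (sub_pos.2 hpt)).const_mul K
  obtain ⟨X, hX⟩ := eventually_atTop.1
    ((hlim.eventually (gt_mem_nhds hη)).and (eventually_gt_atTop 0))
  have hX0 : 0 < X := (hX X le_rfl).2
  refine ⟨|K| * X ^ p, fun x hx => ?_⟩
  have hxt : 0 ≤ x ^ t := rpow_nonneg hx t
  rcases le_total x X with hxX | hXx
  · have hsmall : K * x ^ p ≤ |K| * X ^ p :=
      (mul_le_mul_of_nonneg_right (le_abs_self K) (rpow_nonneg hx p)).trans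
        (mul_le_mul_of_nonneg_left (rpow_le_rpow hx hxX hp) (abs_nonneg K))
    linarith [mul_nonneg hη.le hxt]
  · have hlarge : K * x ^ p = K * x ^ (p - t) * x ^ t := by
      rw [mul_assoc, ← rpow_add (hX0.trans_le hXx), sub_add_cancel]
    have hC : 0 ≤ |K| * X ^ p := by positivity
    linarith [mul_le_mul_of_nonneg_right (hX x hXx).1.le hxt]

section Eigenvalues

variable {g : ℕ → ℝ}

lemma hasSum_eigen (hg : ∀ k, 0 ≤ g k) (d : ℕ) : HasSum (eigen g d) 1 := by
  have hω0 (k : Fin d) := omegaOf_nonneg (hg k)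
  have hω1 (k : Fin d) := omegaOf_lt_one (hg k)
  have hprod := hasSum_pi_prod (F := fun k n => (1 - omegaOf (g k)) * omegaOf (g k) ^ n)
    (fun k => hasSum_one_sub_mul_pow (hω0 k) (hω1 k))
    fun k n => mul_nonneg (sub_nonneg.2 (hω1 k).le) (pow_nonneg (hω0 k) n)
  rwa [prod_const_one] at hprod

lemma sum_eigen_piFinset_range (d m : ℕ) :
    ∑ j ∈ Fintype.piFinset (fun _ : Fin d => range m), eigen g d j
      = ∏ k : Fin d, (1 - omegaOf (g k) ^ m) := by
  simp_rw [← mul_neg_geom_sum, mul_sum]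
  exact (prod_univ_sum (fun _ : Fin d => range m)
    fun k n => (1 - omegaOf (g k)) * omegaOf (g k) ^ n).symm

lemma tsum_eigen_compl_piFinset_range_le (hg : ∀ k, 0 ≤ g k) (hanti : Antitone g) (d m : ℕ) :
    ∑' j : {j // j ∉ Fintype.piFinset (fun _ : Fin d => range m)}, eigen g d j
      ≤ d * omegaOf (g 0) ^ m := by
  have htotal := (hasSum_eigen hg d).summable.sum_add_tsum_subtype_compl
    (Fintype.piFinset fun _ : Fin d => range m)
  rw [(hasSum_eigen hg d).tsum_eq, sum_eigen_piFinset_range] at htotal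
  have hω0 (k : Fin d) := omegaOf_nonneg (hg k)
  have hprod := one_sub_sum_le_prod_one_sub univ (f := fun k : Fin d => omegaOf (g k) ^ m)
    (fun k _ => pow_nonneg (hω0 k) m) fun k _ => pow_le_one₀ (hω0 k) (omegaOf_lt_one (hg k)).le
  have hsum : ∑ k : Fin d, omegaOf (g k) ^ m ≤ d * omegaOf (g 0) ^ m := by
    calc ∑ k : Fin d, omegaOf (g k) ^ m ≤ ∑ _k : Fin d, omegaOf (g 0) ^ m :=
          sum_le_sum fun k _ => pow_le_pow_left₀ (hω0 k)
            (omegaOf_le_omegaOf (hg k) (hanti (Nat.zero_le k))) m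
      _ = d * omegaOf (g 0) ^ m := by simp
  linarith

lemma infoComp_le_pow (hg : ∀ k, 0 ≤ g k) (hanti : Antitone g) {d m : ℕ} {ε : ℝ}
    (h : d * omegaOf (g 0) ^ m ≤ ε ^ 2) : infoComp g ε d ≤ m ^ d :=
  Nat.sInf_le ⟨_, by simp, (tsum_eigen_compl_piFinset_range_le hg hanti d m).trans h⟩

lemma log_infoComp_le (hpos : ∀ k, 0 < g k) (hanti : Antitone g) {d : ℕ}
    (hd : 1 ≤ d) {ε : ℝ} (hε0 : 0 < ε) (hε1 : ε < 1) :
    log (infoComp g ε d)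
      ≤ d * log ((3 / -log (omegaOf (g 0)) + 1) * d * (1 + log ε⁻¹)) := by
  set ω := omegaOf (g 0)
  set c := -log ω
  set L := log ε⁻¹
  set D : ℝ := (d : ℝ)
  have hω0 : 0 < ω := omegaOf_pos (hpos 0)
  have hc : 0 < c := neg_pos.2 (log_neg hω0 (omegaOf_lt_one (hpos 0).le))
  have hL : 0 < L := log_pos (one_lt_inv₀ hε0 |>.2 hε1)
  have hD : 1 ≤ D := Nat.one_le_cast.2 hd
  have hlogD : 0 ≤ log D := log_nonneg hD
  set m := ⌈(log D + 2 * L) / c⌉₊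
  have hm_ge : (log D + 2 * L) / c ≤ m := Nat.le_ceil _
  have hm_lt : (m : ℝ) < (log D + 2 * L) / c + 1 := Nat.ceil_lt_add_one (by positivity)
  have hm_pos : 0 < m := Nat.ceil_pos.2 (by positivity)
  have htail : D * ω ^ m ≤ ε ^ 2 := by
    have hexp : ω ^ m = exp (-(m * c)) := by
      rw [neg_mul_eq_mul_neg, neg_neg, exp_nat_mul, exp_log hω0]
    calc D * ω ^ m ≤ D * exp (-(log D + 2 * L)) := by
          rw [hexp]
          gcongr
          exact (div_le_iff₀ hc).1 hm_ge
      _ = ε ^ 2 := by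
          have h2L : -(2 * L) = log (ε ^ 2) := by simp [L, log_inv, log_pow]
          rw [neg_add, exp_add, exp_neg, exp_log (by positivity), h2L, exp_log (by positivity)]
          field_simp
  have hm_le : (m : ℝ) ≤ (3 / c + 1) * D * (1 + L) := by
    have hDL : 1 ≤ D * (1 + L) := one_le_mul_of_one_le_of_one_le hD (by linarith)
    have hnum : log D + 2 * L ≤ 3 * (D * (1 + L)) := by
      nlinarith [log_le_self (by positivity : 0 ≤ D)]
    have hdiv : (log D + 2 * L) / c ≤ 3 / c * (D * (1 + L)) := by
      rw [div_mul_eq_mul_div]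
      gcongr
    linarith
  have hn : (infoComp g ε d : ℝ) ≤ (m : ℝ) ^ d := by
    exact_mod_cast infoComp_le_pow (fun k => (hpos k).le) hanti htail
  calc log (infoComp g ε d) ≤ log ((m : ℝ) ^ d) := by
        rcases (infoComp g ε d).eq_zero_or_pos with h0 | h0
        · rw [h0, Nat.cast_zero, log_zero]
          exact log_nonneg (one_le_pow₀ (Nat.one_le_cast.2 hm_pos))
        · exact log_le_log (by exact_mod_cast h0) hn
    _ = D * log m := log_pow (m : ℝ) d
    _ ≤ D * log ((3 / c + 1) * D * (1 + L)) := by gcongr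

lemma exists_log_infoComp_le_rpow_add (hpos : ∀ k, 0 < g k) (hanti : Antitone g)
    {p q : ℝ} (hp : 1 < p) (hq : 0 < q) :
    ∃ K, ∀ (d : ℕ) (ε : ℝ), 1 ≤ d → 0 < ε → ε < 1 →
      log (infoComp g ε d) ≤ K * ((d : ℝ) ^ p + (1 + log ε⁻¹) ^ q) := by
  set C := 3 / -log (omegaOf (g 0)) + 1
  have hC : 1 ≤ C := le_add_of_nonneg_left <| div_nonneg zero_le_three <| neg_nonneg.2 <|
    log_nonpos (omegaOf_nonneg (hpos 0).le) (omegaOf_lt_one (hpos 0).le).le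
  have hpp' := Real.HolderConjugate.conjExponent hp
  set p' := conjExponent p
  have hlogC : 0 ≤ log C := log_nonneg hC
  have hp'p : 0 ≤ p' / p := div_nonneg hpp'.symm.nonneg hpp'.nonneg
  refine ⟨log C + 2 * (p' / p) + p' / q, fun d ε hd hε0 hε1 => ?_⟩
  set D : ℝ := (d : ℝ)
  set X := 1 + log ε⁻¹
  have hD : 1 ≤ D := Nat.one_le_cast.2 hd
  have hX : 1 ≤ X := le_add_of_nonneg_right (log_nonneg (one_le_inv₀ hε0 |>.2 hε1.le))
  have hXq : 0 ≤ X ^ q := rpow_nonneg (by positivity) q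
  have hconst : D * log C ≤ log C * D ^ p := by
    rw [mul_comm]
    exact mul_le_mul_of_nonneg_left (self_le_rpow_of_one_le hD hp.le) hlogC
  have hself : D * log D ≤ p' / p * (D ^ p + D ^ p) :=
    mul_log_le_rpow_add hpp' (by linarith) (by positivity) (by positivity)
  have hcross : D * log X ≤ p' / q * (D ^ p + X ^ q) :=
    mul_log_le_rpow_add hpp' hq (by positivity) (by positivity)
  have hsplit : D * log (C * D * X) = D * log C + D * log D + D * log X := by
    rw [log_mul (by positivity) (by positivity), log_mul (by positivity) (by positivity)]
    ring
  calc log (infoComp g ε d) ≤ D * log (C * D * X) := log_infoComp_le hpos hanti hd hε0 hε1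
    _ ≤ log C * D ^ p + p' / p * (D ^ p + D ^ p) + p' / q * (D ^ p + X ^ q) := by
        linarith
    _ ≤ (log C + 2 * (p' / p) + p' / q) * (D ^ p + X ^ q) := by
        linarith [mul_nonneg (add_nonneg hlogC (mul_nonneg zero_le_two hp'p)) hXq]

theorem ECWeakTract.of_log_infoComp_le {s t p q K : ℝ} (hp : 0 ≤ p) (hpt : p < t)
    (hq : 0 ≤ q) (hqs : q < s)
    (hbound : ∀ (d : ℕ) (ε : ℝ), 1 ≤ d → 0 < ε → ε < 1 →
      log (infoComp g ε d) ≤ K * ((d : ℝ) ^ p + (1 + log ε⁻¹) ^ q)) :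
    ECWeakTract g s t := by
  intro η hη
  obtain ⟨C₁, hC₁⟩ := exists_mul_rpow_le_mul_rpow_add hp hpt K (half_pos hη)
  obtain ⟨C₂, hC₂⟩ := exists_mul_rpow_le_mul_rpow_add hq hqs K (half_pos hη)
  have hlog : Tendsto (fun y : ℝ => η / 2 * (1 + log y) ^ s) atTop atTop :=
    ((tendsto_rpow_atTop (hq.trans_lt hqs)).comp
      (tendsto_atTop_add_const_left _ 1 tendsto_log_atTop)).const_mul_atTop (half_pos hη)
  have hpow : Tendsto (fun x : ℝ => η / 2 * x ^ t) atTop atTop :=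
    (tendsto_rpow_atTop (hp.trans_lt hpt)).const_mul_atTop (half_pos hη)
  obtain ⟨R₁, hR₁⟩ := eventually_atTop.1 (hlog.eventually_ge_atTop (C₁ + C₂))
  obtain ⟨R₂, hR₂⟩ := eventually_atTop.1 (hpow.eventually_ge_atTop (C₁ + C₂))
  refine ⟨R₁ + R₂, fun d ε hd hε0 hε1 hR => ?_⟩
  have hX : 0 ≤ 1 + log ε⁻¹ :=
    add_nonneg zero_le_one (log_nonneg (one_le_inv₀ hε0 |>.2 hε1.le))
  have hXs : 0 ≤ (1 + log ε⁻¹) ^ s := rpow_nonneg hX s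
  have hdt : 0 ≤ (d : ℝ) ^ t := rpow_nonneg d.cast_nonneg t
  have hconst : C₁ + C₂ ≤ η / 2 * (1 + log ε⁻¹) ^ s ∨ C₁ + C₂ ≤ η / 2 * (d : ℝ) ^ t := by
    rcases le_total R₁ ε⁻¹ with h | h
    · exact .inl (hR₁ _ h)
    · exact .inr (hR₂ _ (by linarith))
  have hn := hbound d ε hd hε0 hε1
  have hd_term := hC₁ d d.cast_nonneg
  have hX_term := hC₂ _ hX
  rcases hconst with h | h <;> linarith [mul_nonneg hη.le hXs, mul_nonneg hη.le hdt]

end Eigenvalues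

/-- For every `s > 0` and `t > 1`, EC-`(s,t)`-weak tractability holds for all nonincreasing
sequences of positive shape parameters. -/
theorem stmt6 (s t : ℝ) (hs : 0 < s) (ht : 1 < t)
    (g : ℕ → ℝ) (hpos : ∀ j, 0 < g j) (hanti : Antitone g) :
    ECWeakTract g s t := by
  obtain ⟨K, hK⟩ := exists_log_infoComp_le_rpow_add hpos hanti
    (p := (t + 1) / 2) (by linarith) (q := s / 2) (by linarith)
  exact ECWeakTract.of_log_infoComp_le (by linarith) (by linarith) (by linarith) (by linarith) hK
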